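/- arXiv:2605.19141 — 2 statements merged into one kernel-verified Lean document; each statement's English description precedes it below -/
import Mathlib

section
/- Let W, D be n×n real matrices with nonnegative entries and let α, β ≥ 0. For all x, y ∈ S = {s ∈ ℝ^n : ‖s − 1‖_∞ ≤ 1}, the GRASP operator satisfies ‖G(x) − G(y)‖_∞ ≤ ℓ·‖x − y‖_∞ with ℓ := β‖D‖₁ + α‖W‖₁·(‖G(x)‖_∞ + ‖G(y)‖_∞)/2. -/
open Finset

/-- Maximum absolute column sum norm `‖A‖₁ = max_j ∑_i |A_{ij}|`. -/
noncomputable def matNorm1 {n : ℕ} (A : Matrix (Fin n) (Fin n) ℝ) : ℝ :=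
  ⨆ j, ∑ i, |A i j|

/-- The GRASP operator `G(s)_i = (1 + β (Dᵀ s)_i) / (1 + α (Wᵀ s)_i)`. -/
noncomputable def grasp {n : ℕ} (W D : Matrix (Fin n) (Fin n) ℝ) (α β : ℝ)
    (s : Fin n → ℝ) : Fin n → ℝ :=
  fun i => (1 + β * ∑ k, D k i * s k) / (1 + α * ∑ k, W k i * s k)

lemma colsum_le_matNorm1 {n : ℕ} (A : Matrix (Fin n) (Fin n) ℝ) (j : Fin n) :
    ∑ i, |A i j| ≤ matNorm1 A :=
  le_ciSup (f := fun j => ∑ i, |A i j|) (Set.Finite.bddAbove (Set.finite_range _)) j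

lemma matNorm1_nonneg {n : ℕ} (A : Matrix (Fin n) (Fin n) ℝ) : 0 ≤ matNorm1 A := by
  rcases isEmpty_or_nonempty (Fin n) with h | h
  · simp [matNorm1, ciSup_of_empty, Real.sSup_empty]
  · obtain ⟨j⟩ := h
    exact le_trans (Finset.sum_nonneg fun i _ => abs_nonneg _) (colsum_le_matNorm1 A j)

lemma diff_sum_bound {n : ℕ} (A : Matrix (Fin n) (Fin n) ℝ) (j : Fin n)
    (x y : Fin n → ℝ) :
    |∑ k, A k j * x k - ∑ k, A k j * y k| ≤ matNorm1 A * ‖x - y‖ := by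
  have h1 : ∑ k, A k j * x k - ∑ k, A k j * y k = ∑ k, A k j * (x k - y k) := by
    rw [← Finset.sum_sub_distrib]; congr 1; ext k; ring
  rw [h1]
  calc |∑ k, A k j * (x k - y k)| ≤ ∑ k, |A k j * (x k - y k)| :=
        Finset.abs_sum_le_sum_abs _ _
    _ ≤ ∑ k, |A k j| * ‖x - y‖ := by
        apply Finset.sum_le_sum
        intro k _
        rw [abs_mul]
        apply mul_le_mul_of_nonneg_left _ (abs_nonneg _)
        have := norm_le_pi_norm (x - y) k
        simpa [Real.norm_eq_abs] using this
    _ = (∑ k, |A k j|) * ‖x - y‖ := by rw [← Finset.sum_mul]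
    _ ≤ matNorm1 A * ‖x - y‖ :=
        mul_le_mul_of_nonneg_right (colsum_le_matNorm1 A j) (norm_nonneg _)

lemma key_estimate (gx gy wx wy dx dy Qx Qy α β Gx Gy Wn Dn e : ℝ)
    (hQx : 1 ≤ Qx) (hQy : 1 ≤ Qy)
    (hgx : gx = (1 + β * dx) / Qx) (hgy : gy = (1 + β * dy) / Qy)
    (hQx' : Qx = 1 + α * wx) (hQy' : Qy = 1 + α * wy)
    (hα : 0 ≤ α) (hβ : 0 ≤ β) (he : 0 ≤ e)
    (hGx : |gx| ≤ Gx) (hGy : |gy| ≤ Gy)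
    (hw : |wy - wx| ≤ Wn * e) (hd : |dx - dy| ≤ Dn * e) :
    |gx - gy| ≤ (β * Dn + α * Wn * ((Gx + Gy) / 2)) * e := by
  have hQx0 : (0:ℝ) < Qx := lt_of_lt_of_le one_pos hQx
  have hQy0 : (0:ℝ) < Qy := lt_of_lt_of_le one_pos hQy
  have hrel : α * (wy - wx) = Qy - Qx := by rw [hQx', hQy']; ring
  have hid : gx - gy =
      (gx * (α * (wy - wx)) / Qy + gy * (α * (wy - wx)) / Qx
        + β * (dx - dy) / Qy + β * (dx - dy) / Qx) / 2 := by
    rw [hrel, hgx, hgy]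
    field_simp
    ring
  have hGx0 : 0 ≤ Gx := le_trans (abs_nonneg _) hGx
  have hGy0 : 0 ≤ Gy := le_trans (abs_nonneg _) hGy
  -- bound each term
  have t1 : |gx * (α * (wy - wx)) / Qy| ≤ Gx * (α * (Wn * e)) := by
    rw [abs_div, abs_of_pos hQy0]
    calc |gx * (α * (wy - wx))| / Qy ≤ |gx * (α * (wy - wx))| :=
          div_le_self (abs_nonneg _) hQy
      _ = |gx| * (α * |wy - wx|) := by rw [abs_mul, abs_mul, abs_of_nonneg hα]
      _ ≤ Gx * (α * (Wn * e)) := by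
          apply mul_le_mul hGx (mul_le_mul_of_nonneg_left hw hα) (by positivity) hGx0
  have t2 : |gy * (α * (wy - wx)) / Qx| ≤ Gy * (α * (Wn * e)) := by
    rw [abs_div, abs_of_pos hQx0]
    calc |gy * (α * (wy - wx))| / Qx ≤ |gy * (α * (wy - wx))| :=
          div_le_self (abs_nonneg _) hQx
      _ = |gy| * (α * |wy - wx|) := by rw [abs_mul, abs_mul, abs_of_nonneg hα]
      _ ≤ Gy * (α * (Wn * e)) := by
          apply mul_le_mul hGy (mul_le_mul_of_nonneg_left hw hα) (by positivity) hGy0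
  have t3 : |β * (dx - dy) / Qy| ≤ β * (Dn * e) := by
    rw [abs_div, abs_of_pos hQy0]
    calc |β * (dx - dy)| / Qy ≤ |β * (dx - dy)| := div_le_self (abs_nonneg _) hQy
      _ = β * |dx - dy| := by rw [abs_mul, abs_of_nonneg hβ]
      _ ≤ β * (Dn * e) := mul_le_mul_of_nonneg_left hd hβ
  have t4 : |β * (dx - dy) / Qx| ≤ β * (Dn * e) := by
    rw [abs_div, abs_of_pos hQx0]
    calc |β * (dx - dy)| / Qx ≤ |β * (dx - dy)| := div_le_self (abs_nonneg _) hQx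
      _ = β * |dx - dy| := by rw [abs_mul, abs_of_nonneg hβ]
      _ ≤ β * (Dn * e) := mul_le_mul_of_nonneg_left hd hβ
  calc |gx - gy|
      = |gx * (α * (wy - wx)) / Qy + gy * (α * (wy - wx)) / Qx
          + β * (dx - dy) / Qy + β * (dx - dy) / Qx| / 2 := by
        rw [hid, abs_div]; norm_num
    _ ≤ (Gx * (α * (Wn * e)) + Gy * (α * (Wn * e)) + β * (Dn * e) + β * (Dn * e)) / 2 := by
        have habs : |gx * (α * (wy - wx)) / Qy + gy * (α * (wy - wx)) / Qx
              + β * (dx - dy) / Qy + β * (dx - dy) / Qx|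
            ≤ |gx * (α * (wy - wx)) / Qy| + |gy * (α * (wy - wx)) / Qx|
              + |β * (dx - dy) / Qy| + |β * (dx - dy) / Qx| := by
          apply (abs_add_le _ _).trans
          gcongr
          apply (abs_add_le _ _).trans
          gcongr
          exact abs_add_le _ _
        linarith
    _ = (β * Dn + α * Wn * ((Gx + Gy) / 2)) * e := by ring

/-- Lipschitz bound: for nonnegative `W, D` and `α, β ≥ 0`, and `x, y` in
`S = {s : ‖s - 1‖_∞ ≤ 1}`, the GRASP operator satisfies
`‖G(x) - G(y)‖_∞ ≤ (β‖D‖₁ + α‖W‖₁ (‖G(x)‖_∞ + ‖G(y)‖_∞)/2) ‖x - y‖_∞`. -/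
theorem grasp_lipschitz_bound {n : ℕ} (W D : Matrix (Fin n) (Fin n) ℝ)
    (hW : ∀ i j, 0 ≤ W i j) (hD : ∀ i j, 0 ≤ D i j)
    (α β : ℝ) (hα : 0 ≤ α) (hβ : 0 ≤ β)
    (x y : Fin n → ℝ) (hx : ‖x - 1‖ ≤ 1) (hy : ‖y - 1‖ ≤ 1) :
    ‖grasp W D α β x - grasp W D α β y‖ ≤
      (β * matNorm1 D +
        α * matNorm1 W * ((‖grasp W D α β x‖ + ‖grasp W D α β y‖) / 2)) * ‖x - y‖ := by
  have hL : 0 ≤ β * matNorm1 D +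
      α * matNorm1 W * ((‖grasp W D α β x‖ + ‖grasp W D α β y‖) / 2) := by
    have := matNorm1_nonneg D
    have := matNorm1_nonneg W
    have := norm_nonneg (grasp W D α β x)
    have := norm_nonneg (grasp W D α β y)
    positivity
  rw [pi_norm_le_iff_of_nonneg (mul_nonneg hL (norm_nonneg _))]
  intro i
  have hx0 : ∀ k, 0 ≤ x k := by
    intro k
    have h1 : |x k - 1| ≤ 1 := by
      have := norm_le_pi_norm (x - 1) k
      simp only [Pi.sub_apply, Pi.one_apply, Real.norm_eq_abs] at this
      exact this.trans hx
    linarith [(abs_le.mp h1).1]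
  have hy0 : ∀ k, 0 ≤ y k := by
    intro k
    have h1 : |y k - 1| ≤ 1 := by
      have := norm_le_pi_norm (y - 1) k
      simp only [Pi.sub_apply, Pi.one_apply, Real.norm_eq_abs] at this
      exact this.trans hy
    linarith [(abs_le.mp h1).1]
  have hwx : 0 ≤ ∑ k, W k i * x k :=
    Finset.sum_nonneg fun k _ => mul_nonneg (hW k i) (hx0 k)
  have hwy : 0 ≤ ∑ k, W k i * y k :=
    Finset.sum_nonneg fun k _ => mul_nonneg (hW k i) (hy0 k)
  simp only [Pi.sub_apply, Real.norm_eq_abs]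
  apply key_estimate (grasp W D α β x i) (grasp W D α β y i)
    (∑ k, W k i * x k) (∑ k, W k i * y k)
    (∑ k, D k i * x k) (∑ k, D k i * y k)
    (1 + α * ∑ k, W k i * x k) (1 + α * ∑ k, W k i * y k) α β
    ‖grasp W D α β x‖ ‖grasp W D α β y‖ (matNorm1 W) (matNorm1 D) ‖x - y‖
  · linarith [mul_nonneg hα hwx]
  · linarith [mul_nonneg hα hwy]
  · rfl
  · rfl
  · rfl
  · rfl
  · exact hα
  · exact hβ
  · exact norm_nonneg _
  · have := norm_le_pi_norm (grasp W D α β x) i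
    simpa [Real.norm_eq_abs] using this
  · have := norm_le_pi_norm (grasp W D α β y) i
    simpa [Real.norm_eq_abs] using this
  · exact diff_sum_bound W i y x |>.trans_eq (by rw [norm_sub_rev])
  · exact diff_sum_bound D i x y
end

section
/- Let W, D be n×n real matrices with nonnegative entries, let α, β ≥ 0 satisfy α ≤ 1/(4‖W‖₁) and β ≤ 1/(4‖D‖₁), and let γ ∈ (0, 1]. Define the damped GRASP operator Ĝ(s) := (1 − γ)s + γ·G(s). Then Ĝ maps S = {s ∈ ℝ^n : ‖s − 1‖_∞ ≤ 1} into itself, the fixed points of Ĝ in S coincide with the fixed points of G in S, and for every s₀ ∈ S the damped iteration s_{k+1} = Ĝ(s_k) converges to the unique fixed point s* of G in S. -/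
/-!
On `S` every coordinate of `s` lies in `[0, 2]`, so the column-sum bounds give
`a = α (Wᵀ s)_i ∈ [0, 1/2]` and `c = β (Dᵀ s)_i ∈ [0, 1/2]`. Hence `G(s)_i = (1 + c)/(1 + a)`
lies within `1/2` of `1`, and since `a`, `c` are `1/4`-Lipschitz in the sup norm, `G` is
`3/4`-Lipschitz on `S`. The damped operator is a convex combination of the identity and `G`,
so it maps the convex set `S` into itself and is a `(1 - γ/4)`-contraction there; Banach's
fixed-point theorem on the closed set `S` finishes the proof.
-/

open Finset

/-- The damped GRASP operator `Ĝ(s) = (1 - γ) s + γ G(s)`. -/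
noncomputable def graspDamped {n : ℕ} (W D : Matrix (Fin n) (Fin n) ℝ) (α β γ : ℝ)
    (s : Fin n → ℝ) : Fin n → ℝ :=
  (1 - γ) • s + γ • grasp W D α β s

open Set Metric Filter Topology NNReal Function

section Damped

variable {𝕜 E : Type*}

def damped [Ring 𝕜] [AddCommGroup E] [Module 𝕜 E] (γ : 𝕜) (f : E → E) (x : E) : E :=
  (1 - γ) • x + γ • f x

theorem damped_eq_self_iff [Field 𝕜] [AddCommGroup E] [Module 𝕜 E] {γ : 𝕜} (hγ : γ ≠ 0)
    (f : E → E) (x : E) : damped γ f x = x ↔ f x = x := by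
  have h : damped γ f x = x + γ • (f x - x) := by
    rw [damped]
    module
  rw [h, add_eq_left, smul_eq_zero, sub_eq_zero, or_iff_right hγ]

theorem Convex.mapsTo_damped [AddCommGroup E] [Module ℝ E] {s : Set E} (hs : Convex ℝ s)
    {f : E → E} (hf : MapsTo f s s) {γ : ℝ} (hγ0 : 0 ≤ γ) (hγ1 : γ ≤ 1) :
    MapsTo (damped γ f) s s :=
  fun _ hx => hs hx (hf hx) (sub_nonneg.2 hγ1) hγ0 (sub_add_cancel 1 γ)

theorem lipschitzOnWith_damped [SeminormedAddCommGroup E] [NormedSpace ℝ E] {s : Set E}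
    {f : E → E} {K : ℝ≥0} (hf : LipschitzOnWith K f s) {γ : ℝ} (hγ0 : 0 ≤ γ) (hγ1 : γ ≤ 1) :
    LipschitzOnWith (1 - γ + γ * K).toNNReal (damped γ f) s := by
  refine LipschitzOnWith.of_dist_le_mul fun x hx y hy => ?_
  have h1γ : 0 ≤ 1 - γ := sub_nonneg.2 hγ1
  rw [Real.coe_toNNReal _ (by positivity), dist_eq_norm, dist_eq_norm]
  calc ‖damped γ f x - damped γ f y‖
      = ‖(1 - γ) • (x - y) + γ • (f x - f y)‖ := by
        rw [damped, damped]
        congr 1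
        module
    _ ≤ (1 - γ) * ‖x - y‖ + γ * ‖f x - f y‖ := by
        refine (norm_add_le _ _).trans_eq ?_
        rw [norm_smul, norm_smul, Real.norm_of_nonneg h1γ, Real.norm_of_nonneg hγ0]
    _ ≤ (1 - γ) * ‖x - y‖ + γ * (K * ‖x - y‖) := by
        gcongr
        simpa only [dist_eq_norm] using hf.dist_le_mul x hx y hy
    _ = (1 - γ + γ * K) * ‖x - y‖ := by ring

end Damped

theorem LipschitzOnWith.exists_unique_isFixedPt_tendsto_iterate {α : Type*} [MetricSpace α]
    {f : α → α} {s : Set α} {K : ℝ≥0} (hsc : IsComplete s) (hne : s.Nonempty)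
    (hsf : MapsTo f s s) (hK : K < 1) (hf : LipschitzOnWith K f s) :
    ∃ y ∈ s, IsFixedPt f y ∧ (∀ z ∈ s, IsFixedPt f z → z = y) ∧
      ∀ x ∈ s, Tendsto (fun k => f^[k] x) atTop (𝓝 y) := by
  have hc : ContractingWith K (hsf.restrict f s s) := ⟨hK, hf.mapsToRestrict hsf⟩
  have huniq : ∀ y ∈ s, ∀ z ∈ s, IsFixedPt f y → IsFixedPt f z → y = z :=
    fun y hy z hz hfy hfz => congrArg Subtype.val <|
      hc.fixedPoint_unique' (x := ⟨y, hy⟩) (y := ⟨z, hz⟩) (Subtype.ext hfy) (Subtype.ext hfz)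
  obtain ⟨x₀, hx₀⟩ := hne
  obtain ⟨y, hys, hfy, -⟩ := hc.exists_fixedPoint' hsc hsf hx₀ (edist_ne_top _ _)
  refine ⟨y, hys, hfy, fun z hz hfz => huniq z hz y hys hfz hfy, fun x hx => ?_⟩
  obtain ⟨y', hy's, hfy', htend, -⟩ := hc.exists_fixedPoint' hsc hsf hx (edist_ne_top _ _)
  rwa [huniq y hys y' hy's hfy hfy']

theorem abs_one_add_div_one_add_sub_one_le {a c : ℝ} (ha : a ∈ Set.Icc 0 (1 / 2))
    (hc : c ∈ Set.Icc 0 (1 / 2)) : |(1 + c) / (1 + a) - 1| ≤ 1 / 2 := by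
  obtain ⟨ha0, ha1⟩ := ha
  obtain ⟨hc0, hc1⟩ := hc
  have h1a : 0 < 1 + a := by linarith
  rw [abs_sub_le_iff, sub_le_iff_le_add, sub_le_comm, div_le_iff₀ h1a, le_div_iff₀ h1a]
  constructor <;> nlinarith

theorem abs_one_add_div_one_add_sub_le {a b c e d : ℝ} (ha : a ∈ Set.Icc 0 (1 / 2)) (hb : 0 ≤ b)
    (hc : c ∈ Set.Icc 0 (1 / 2)) (hab : |a - b| ≤ d / 4) (hce : |c - e| ≤ d / 4) :
    |(1 + c) / (1 + a) - (1 + e) / (1 + b)| ≤ 3 / 4 * d := by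
  obtain ⟨ha0, ha1⟩ := ha
  obtain ⟨hc0, hc1⟩ := hc
  have hd : 0 ≤ d := by linarith [abs_nonneg (a - b)]
  have h1a : 0 < 1 + a := by linarith
  have h1b : 0 < 1 + b := by linarith
  have hnum : (1 + c) * (1 + b) - (1 + a) * (1 + e) = (1 + c) * (b - a) + (1 + a) * (c - e) := by
    ring
  rw [div_sub_div _ _ h1a.ne' h1b.ne', abs_div, abs_of_pos (mul_pos h1a h1b),
    div_le_iff₀ (mul_pos h1a h1b), hnum]
  calc |(1 + c) * (b - a) + (1 + a) * (c - e)|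
      ≤ (1 + c) * |b - a| + (1 + a) * |c - e| := by
        refine (abs_add_le _ _).trans_eq ?_
        rw [abs_mul, abs_mul, abs_of_pos (by linarith), abs_of_pos h1a]
    _ ≤ 3 / 2 * (d / 4) + 3 / 2 * (d / 4) := by
        rw [abs_sub_comm] at hab
        gcongr <;> linarith
    _ = 3 / 4 * d := by ring
    _ ≤ 3 / 4 * d * ((1 + a) * (1 + b)) :=
        le_mul_of_one_le_right (by positivity) (by nlinarith)

theorem mem_Icc_of_norm_sub_one_le {ι : Type*} [Fintype ι] {s : ι → ℝ} (hs : ‖s - 1‖ ≤ 1)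
    (k : ι) : s k ∈ Set.Icc 0 2 := by
  have h := (norm_le_pi_norm (s - 1) k).trans hs
  rw [Pi.sub_apply, Pi.one_apply, Real.norm_eq_abs, abs_sub_le_iff] at h
  constructor <;> linarith

section WeightedSum

variable {ι : Type*} [Fintype ι] {w : ι → ℝ} {δ : ℝ}

theorem mul_sum_mul_mem_Icc (hw : ∀ k, 0 ≤ w k) (hδ : 0 ≤ δ) (hwδ : δ * ∑ k, w k ≤ 1 / 4)
    {s : ι → ℝ} (hs : ‖s - 1‖ ≤ 1) : δ * ∑ k, w k * s k ∈ Set.Icc 0 (1 / 2) := by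
  have hs' := mem_Icc_of_norm_sub_one_le hs
  refine ⟨mul_nonneg hδ (sum_nonneg fun k _ => mul_nonneg (hw k) (hs' k).1), ?_⟩
  calc δ * ∑ k, w k * s k ≤ δ * ∑ k, w k * 2 := by
        gcongr with k
        exacts [hw k, (hs' k).2]
    _ = 2 * (δ * ∑ k, w k) := by rw [← sum_mul]; ring
    _ ≤ 1 / 2 := by linarith

theorem abs_mul_sum_mul_sub_le (hw : ∀ k, 0 ≤ w k) (hδ : 0 ≤ δ) (hwδ : δ * ∑ k, w k ≤ 1 / 4)
    (s t : ι → ℝ) : |δ * ∑ k, w k * s k - δ * ∑ k, w k * t k| ≤ ‖s - t‖ / 4 := by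
  calc |δ * ∑ k, w k * s k - δ * ∑ k, w k * t k| = δ * |∑ k, w k * (s - t) k| := by
        simp only [← mul_sub, ← sum_sub_distrib, abs_mul, abs_of_nonneg hδ, Pi.sub_apply]
    _ ≤ δ * ∑ k, w k * ‖s - t‖ := by
        gcongr
        refine (abs_sum_le_sum_abs _ _).trans (sum_le_sum fun k _ => ?_)
        rw [abs_mul, abs_of_nonneg (hw k), ← Real.norm_eq_abs]
        exact mul_le_mul_of_nonneg_left (norm_le_pi_norm _ k) (hw k)
    _ = (δ * ∑ k, w k) * ‖s - t‖ := by rw [← sum_mul]; ring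
    _ ≤ 1 / 4 * ‖s - t‖ := by gcongr
    _ = ‖s - t‖ / 4 := by ring

end WeightedSum

theorem mul_sum_abs_le_of_le_inv_matNorm1 {n : ℕ} {A : Matrix (Fin n) (Fin n) ℝ} {δ : ℝ}
    (hδ : 0 ≤ δ) (hδA : δ ≤ 1 / (4 * matNorm1 A)) (j : Fin n) : δ * ∑ i, |A i j| ≤ 1 / 4 := by
  have hcol : ∑ i, |A i j| ≤ matNorm1 A :=
    le_ciSup (Set.finite_range fun j => ∑ i, |A i j|).bddAbove j
  rcases ((sum_nonneg fun i _ => abs_nonneg (A i j)).trans hcol).eq_or_lt with h0 | hpos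
  · -- the junk value `1 / 0 = 0` forces `δ = 0`
    rw [← h0, mul_zero, div_zero] at hδA
    rw [le_antisymm hδA hδ, zero_mul]
    norm_num
  · rw [le_div_iff₀ (by positivity)] at hδA
    nlinarith

section Grasp

variable {n : ℕ} {W D : Matrix (Fin n) (Fin n) ℝ} {α β : ℝ}

theorem grasp_mapsTo_closedBall (hW : ∀ i j, 0 ≤ W i j) (hD : ∀ i j, 0 ≤ D i j)
    (hα : 0 ≤ α) (hβ : 0 ≤ β) (hWα : ∀ i, α * ∑ k, W k i ≤ 1 / 4)
    (hDβ : ∀ i, β * ∑ k, D k i ≤ 1 / 4) :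
    MapsTo (grasp W D α β) (closedBall 1 1) (closedBall 1 (1 / 2)) := by
  intro s hs
  rw [mem_closedBall_iff_norm] at hs ⊢
  refine (pi_norm_le_iff_of_nonneg (by norm_num)).2 fun i => ?_
  rw [Pi.sub_apply, Pi.one_apply, Real.norm_eq_abs]
  exact abs_one_add_div_one_add_sub_one_le
    (mul_sum_mul_mem_Icc (fun k => hW k i) hα (hWα i) hs)
    (mul_sum_mul_mem_Icc (fun k => hD k i) hβ (hDβ i) hs)

theorem grasp_lipschitzOnWith (hW : ∀ i j, 0 ≤ W i j) (hD : ∀ i j, 0 ≤ D i j)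
    (hα : 0 ≤ α) (hβ : 0 ≤ β) (hWα : ∀ i, α * ∑ k, W k i ≤ 1 / 4)
    (hDβ : ∀ i, β * ∑ k, D k i ≤ 1 / 4) :
    LipschitzOnWith (3 / 4) (grasp W D α β) (closedBall 1 1) := by
  refine LipschitzOnWith.of_dist_le_mul fun s hs t ht => ?_
  rw [mem_closedBall_iff_norm] at hs ht
  rw [dist_eq_norm, dist_eq_norm, NNReal.coe_div]
  refine (pi_norm_le_iff_of_nonneg (by positivity)).2 fun i => ?_
  rw [Pi.sub_apply, Real.norm_eq_abs]
  exact abs_one_add_div_one_add_sub_le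
    (mul_sum_mul_mem_Icc (fun k => hW k i) hα (hWα i) hs)
    (mul_sum_mul_mem_Icc (fun k => hW k i) hα (hWα i) ht).1
    (mul_sum_mul_mem_Icc (fun k => hD k i) hβ (hDβ i) hs)
    (abs_mul_sum_mul_sub_le (fun k => hW k i) hα (hWα i) s t)
    (abs_mul_sum_mul_sub_le (fun k => hD k i) hβ (hDβ i) s t)

end Grasp

/-- Damped GRASP: for nonnegative `W, D` with `α ≤ 1/(4‖W‖₁)`, `β ≤ 1/(4‖D‖₁)` and
`γ ∈ (0, 1]`, the damped operator `Ĝ` maps `S = {s : ‖s - 1‖_∞ ≤ 1}` into itself, its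
fixed points in `S` coincide with those of `G`, and the damped iteration converges from
any `s₀ ∈ S` to the unique fixed point `s*` of `G` in `S`. -/
theorem grasp_damped_convergence {n : ℕ} (W D : Matrix (Fin n) (Fin n) ℝ)
    (hW : ∀ i j, 0 ≤ W i j) (hD : ∀ i j, 0 ≤ D i j)
    (α β : ℝ) (hα : 0 ≤ α) (hβ : 0 ≤ β)
    (hα' : α ≤ 1 / (4 * matNorm1 W)) (hβ' : β ≤ 1 / (4 * matNorm1 D))
    (γ : ℝ) (hγ0 : 0 < γ) (hγ1 : γ ≤ 1) :
    (∀ s : Fin n → ℝ, ‖s - 1‖ ≤ 1 → ‖graspDamped W D α β γ s - 1‖ ≤ 1) ∧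
    (∀ s : Fin n → ℝ, ‖s - 1‖ ≤ 1 →
      (graspDamped W D α β γ s = s ↔ grasp W D α β s = s)) ∧
    ∃ s : Fin n → ℝ, ‖s - 1‖ ≤ 1 ∧ grasp W D α β s = s ∧
      (∀ s' : Fin n → ℝ, ‖s' - 1‖ ≤ 1 → grasp W D α β s' = s' → s' = s) ∧
      ∀ s₀ : Fin n → ℝ, ‖s₀ - 1‖ ≤ 1 →
        Filter.Tendsto (fun k => (graspDamped W D α β γ)^[k] s₀)
          Filter.atTop (nhds s) := by
  have hWα i : α * ∑ k, W k i ≤ 1 / 4 := by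
    simpa only [abs_of_nonneg (hW _ i)] using mul_sum_abs_le_of_le_inv_matNorm1 hα hα' i
  have hDβ i : β * ∑ k, D k i ≤ 1 / 4 := by
    simpa only [abs_of_nonneg (hD _ i)] using mul_sum_abs_le_of_le_inv_matNorm1 hβ hβ' i
  have hGD : graspDamped W D α β γ = damped γ (grasp W D α β) := rfl
  have hmaps : MapsTo (damped γ (grasp W D α β)) (closedBall 1 1) (closedBall 1 1) :=
    (convex_closedBall 1 1).mapsTo_damped
      ((grasp_mapsTo_closedBall hW hD hα hβ hWα hDβ).mono_right
        (closedBall_subset_closedBall (by norm_num))) hγ0.le hγ1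
  have hlip := lipschitzOnWith_damped (grasp_lipschitzOnWith hW hD hα hβ hWα hDβ) hγ0.le hγ1
  have hfix s := damped_eq_self_iff hγ0.ne' (grasp W D α β) s
  obtain ⟨s, hs, hGs, huniq, htend⟩ := hlip.exists_unique_isFixedPt_tendsto_iterate
    isClosed_closedBall.isComplete ⟨1, mem_closedBall_self zero_le_one⟩ hmaps
    (Real.toNNReal_lt_one.2 (by push_cast; linarith))
  simp only [hGD, ← mem_closedBall_iff_norm]
  exact ⟨fun s hs => hmaps hs, fun s _ => hfix s, s, hs, (hfix s).1 hGs,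
    fun s' hs' hGs' => huniq s' hs' ((hfix s').2 hGs'), htend⟩
end
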